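/- arXiv:2310.12529 — 2 statements merged into one kernel-verified Lean document; each statement's English description precedes it below -/
import Mathlib

section
/- Let (M, g, f) be a steady gradient Ricci soliton with Ric = Hess f such that the scalar curvature R is uniformly bounded on M and ⟨∇R, ∇f⟩ = −2Ric(∇f,∇f). Suppose on a set Ω one has Ric ≥ c' g and c'^{-1} ≤ |∇f| ≤ c' for some c' > 0. Then no forward trajectory of the flow φ_t of −∇f can remain in Ω for all t ≥ 0. -/
/-! Along a trajectory staying in `Ω` we have `Ric(∇f, ∇f) ≥ c' |∇f|² ≥ c'⁻¹`, so by the mean value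
theorem `R` grows at least linearly in `t`, which is incompatible with `R ≤ B`. -/

open Set

theorem mul_le_sub_of_le_hasDerivAt {g g' : ℝ → ℝ} {C : ℝ}
    (hg : ∀ t, 0 ≤ t → HasDerivAt g (g' t) t) (hC : ∀ t, 0 ≤ t → C ≤ g' t)
    {t : ℝ} (ht : 0 ≤ t) : C * t ≤ g t - g 0 := by
  have hcont : ContinuousOn g (Ici 0) := fun s hs => (hg s hs).continuousAt.continuousWithinAt
  have hdiff : DifferentiableOn ℝ g (interior (Ici 0)) := fun s hs =>
    (hg s (interior_subset hs)).differentiableAt.differentiableWithinAt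
  have hderiv : ∀ s ∈ interior (Ici (0 : ℝ)), C ≤ deriv g s := fun s hs => by
    rw [(hg s (interior_subset hs)).deriv]
    exact hC s (interior_subset hs)
  simpa using (convex_Ici 0).mul_sub_le_image_sub_of_le_deriv hcont hdiff hderiv
    0 self_mem_Ici t ht ht

theorem exists_lt_of_pos_le_hasDerivAt {g g' : ℝ → ℝ} {C : ℝ} (hC₀ : 0 < C)
    (hg : ∀ t, 0 ≤ t → HasDerivAt g (g' t) t) (hC : ∀ t, 0 ≤ t → C ≤ g' t) (B : ℝ) :
    ∃ t, 0 ≤ t ∧ B < g t := by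
  set t := (|B - g 0| + 1) / C
  have ht : 0 ≤ t := by positivity
  have hgrowth := mul_le_sub_of_le_hasDerivAt hg hC ht
  have hCt : C * t = |B - g 0| + 1 := mul_div_cancel₀ _ hC₀.ne'
  exact ⟨t, ht, by linarith [le_abs_self (B - g 0)]⟩

theorem inv_le_mul_sq_of_inv_le {c x : ℝ} (hc : 0 < c) (hx : c⁻¹ ≤ x) : c⁻¹ ≤ c * x ^ 2 :=
  calc c⁻¹ = c * c⁻¹ ^ 2 := by field_simp
    _ ≤ c * x ^ 2 := by gcongr

theorem no_trajectory_stays_in_region_general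
    {M : Type*} (R : M → ℝ) (φ : ℝ → M → M) (Ω : Set M) (q : M)
    (Ric2 nf : ℝ → ℝ) (c' B : ℝ) (hc' : 0 < c')
    -- R is uniformly bounded on M
    (hbound : ∀ x : M, R x ≤ B)
    -- d/dt R(φ_t(q)) = 2 Ric(∇f, ∇f)(φ_t(q))
    (hderiv : ∀ t, 0 ≤ t → HasDerivAt (fun t => R (φ t q)) (2 * Ric2 t) t)
    -- Ric ≥ c' g on Ω, evaluated on ∇f: Ric(∇f,∇f) ≥ c'·|∇f|²
    (hRicLower : ∀ t, 0 ≤ t → φ t q ∈ Ω → c' * (nf t) ^ 2 ≤ Ric2 t)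
    -- c'⁻¹ ≤ |∇f| ≤ c' on Ω
    (hnf : ∀ t, 0 ≤ t → φ t q ∈ Ω → c'⁻¹ ≤ nf t ∧ nf t ≤ c') :
    ¬ (∀ t, 0 ≤ t → φ t q ∈ Ω) := by
  intro hstay
  have hRic : ∀ t, 0 ≤ t → 2 * c'⁻¹ ≤ 2 * Ric2 t := fun t ht => by
    have := inv_le_mul_sq_of_inv_le hc' (hnf t ht (hstay t ht)).1
    linarith [hRicLower t ht (hstay t ht)]
  obtain ⟨t, -, hRt⟩ := exists_lt_of_pos_le_hasDerivAt (by positivity) hderiv hRic B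
  exact hRt.not_ge (hbound _)

/-- Let `(M, g, f)` be a steady gradient Ricci soliton with `Ric = Hess f`,
uniformly bounded scalar curvature `R`, and `⟨∇R, ∇f⟩ = −2 Ric(∇f, ∇f)`, so
that `d/dt R(φ_t(q)) = 2 Ric(∇f, ∇f)(φ_t(q))` along the flow `φ_t` of `−∇f`.
Suppose on a set `Ω` one has `Ric ≥ c'·g` and `c'⁻¹ ≤ |∇f| ≤ c'` for some
`c' > 0`.  Then no forward trajectory of `φ_t` can remain in `Ω` for all
`t ≥ 0`.  Here `Ric2 t = Ric(∇f, ∇f)(φ_t(q))` and `nf t = |∇f|(φ_t(q))`. -/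
theorem no_trajectory_stays_in_region
    {M : Type*} (R f : M → ℝ) (φ : ℝ → M → M) (Ω : Set M) (q : M)
    (Ric2 nf : ℝ → ℝ) (c' B : ℝ) (hc' : 0 < c')
    -- R is uniformly bounded on M
    (hbound : ∀ x : M, R x ≤ B)
    -- d/dt R(φ_t(q)) = 2 Ric(∇f, ∇f)(φ_t(q))
    (hderiv : ∀ t, 0 ≤ t → HasDerivAt (fun t => R (φ t q)) (2 * Ric2 t) t)
    -- Ric ≥ c' g on Ω, evaluated on ∇f: Ric(∇f,∇f) ≥ c'·|∇f|²
    (hRicLower : ∀ t, 0 ≤ t → φ t q ∈ Ω → c' * (nf t) ^ 2 ≤ Ric2 t)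
    -- c'⁻¹ ≤ |∇f| ≤ c' on Ω
    (hnf : ∀ t, 0 ≤ t → φ t q ∈ Ω → c'⁻¹ ≤ nf t ∧ nf t ≤ c') :
    ¬ (∀ t, 0 ≤ t → φ t q ∈ Ω) :=
  no_trajectory_stays_in_region_general R φ Ω q Ric2 nf c' B hc' hbound hderiv hRicLower hnf
end

section
/- Let (M, g, f) be a steady gradient Ricci soliton with Ric = Hess f and Ric ≥ 0 along the relevant geodesics, normalized so that R + |∇f|² = 1 and R → 0 at infinity. Let Γ be a unit-speed integral curve of ∇f/|∇f| with Γ(0) = p. Then for every ε > 0 there is C > 0 such that (1 − ε)s ≤ d(Γ(s), p) ≤ s for all s > C. -/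
open Filter Topology Set

/-! Along `Γ` the function `f` grows with speed `u → 1`, so `f (Γ s) - f p ≥ (1 - ε) s` for
large `s`; since `f y - f x ≤ d(x, y)`, this bounds `d(Γ s, p)` from below.
The upper bound `d(Γ s, p) ≤ s` is the unit speed of `Γ`. -/

lemma eventually_mul_le_mul_add_of_lt {a c : ℝ} (h : a < c) (b : ℝ) :
    ∀ᶠ s in atTop, a * s ≤ c * s + b := by
  filter_upwards [eventually_ge_atTop (-b / (c - a))] with s hs
  rw [div_le_iff₀ (sub_pos.2 h)] at hs
  linarith

lemma eventually_mul_le_of_hasDerivAt_of_tendsto {φ u : ℝ → ℝ} {L a : ℝ}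
    (hφ : ∀ᶠ s in atTop, HasDerivAt φ (u s) s) (hu : Tendsto u atTop (𝓝 L)) (ha : a < L) :
    ∀ᶠ s in atTop, a * s ≤ φ s := by
  obtain ⟨c, hac, hcL⟩ := exists_between ha
  obtain ⟨s₀, hs₀⟩ := eventually_atTop.1 (hφ.and (hu.eventually (eventually_ge_nhds hcL)))
  have hderiv : ∀ s ∈ Ici s₀, HasDerivAt (fun s => φ s - c * s) (u s - c) s := fun s hs => by
    simpa using (hs₀ s hs).1.fun_sub ((hasDerivAt_id s).const_mul c)
  have hmono : MonotoneOn (fun s => φ s - c * s) (Ici s₀) := by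
    refine monotoneOn_of_hasDerivWithinAt_nonneg (f' := fun s => u s - c) (convex_Ici s₀)
      (fun s hs => (hderiv s hs).continuousAt.continuousWithinAt) (fun s hs => ?_) (fun s hs => ?_)
    all_goals rw [interior_Ici] at hs
    · exact (hderiv s (Ioi_subset_Ici_self hs)).hasDerivWithinAt
    · linarith [(hs₀ s (le_of_lt hs)).2]
  filter_upwards [eventually_ge_atTop s₀,
    eventually_mul_le_mul_add_of_lt hac (φ s₀ - c * s₀)] with s hs hlin
  linarith [hmono self_mem_Ici hs hs]

theorem integral_curve_asymptotic_distance_general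
    {M : Type*} [MetricSpace M]
    (f : M → ℝ) (Γ : ℝ → M) (p : M) (hp : Γ 0 = p) (u : ℝ → ℝ)
    -- Γ has unit speed, hence is 1-Lipschitz
    (hLip : ∀ s₁ s₂ : ℝ, dist (Γ s₁) (Γ s₂) ≤ |s₂ - s₁|)
    -- d/ds f(Γ(s)) = |∇f|(Γ(s)) = u(s), with 0 ≤ u ≤ 1 (since R + |∇f|² = 1)
    (hderiv : ∀ s, 0 ≤ s → HasDerivAt (fun s => f (Γ s)) (u s) s)
    -- |∇f| → 1 along Γ (since R → 0 at infinity)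
    (htend : Tendsto u atTop (𝓝 1))
    -- convexity of f along minimal geodesics (Ric ≥ 0, |∇f| ≤ 1):
    (hconv : ∀ x y : M, f y - f x ≤ dist x y) :
    ∀ ε : ℝ, 0 < ε → ∃ C : ℝ, 0 < C ∧ ∀ s : ℝ, C < s →
      (1 - ε) * s ≤ dist (Γ s) p ∧ dist (Γ s) p ≤ s := by
  intro ε hε
  have hgrowth : ∀ᶠ s in atTop, (1 - ε) * s ≤ f (Γ s) - f p :=
    eventually_mul_le_of_hasDerivAt_of_tendsto
      ((eventually_ge_atTop 0).mono fun s hs => (hderiv s hs).sub_const (f p)) htend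
      (by linarith)
  obtain ⟨C, hC⟩ := hgrowth.exists_forall_of_atTop
  refine ⟨max C 1, by positivity, fun s hs => ⟨?_, ?_⟩⟩
  · calc (1 - ε) * s ≤ f (Γ s) - f p := hC s ((le_max_left C 1).trans hs.le)
      _ ≤ dist (Γ s) p := dist_comm p (Γ s) ▸ hconv p (Γ s)
  · have hs_pos : 0 < s := (lt_max_of_lt_right one_pos).trans hs
    simpa [hp, abs_of_pos hs_pos] using hLip s 0

/-- Let `(M, g, f)` be a steady gradient Ricci soliton with `Ric = Hess f`,
`Ric ≥ 0` along the relevant geodesics, normalized so that `R + |∇f|² = 1`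
with `R → 0` at infinity (hence `|∇f| → 1` along the curve).  Let `Γ` be a
unit-speed integral curve of `∇f/|∇f|` with `Γ(0) = p`.  Then for every
`ε > 0` there is `C > 0` such that `(1 − ε)·s ≤ d(Γ(s), p) ≤ s` for all
`s > C`.  Here `u(s) = |∇f|(Γ(s))` is the derivative of `f ∘ Γ`. -/
theorem integral_curve_asymptotic_distance
    {M : Type*} [MetricSpace M]
    (f : M → ℝ) (Γ : ℝ → M) (p : M) (hp : Γ 0 = p) (u : ℝ → ℝ)
    -- Γ has unit speed, hence is 1-Lipschitz
    (hLip : ∀ s₁ s₂ : ℝ, dist (Γ s₁) (Γ s₂) ≤ |s₂ - s₁|)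
    -- d/ds f(Γ(s)) = |∇f|(Γ(s)) = u(s), with 0 ≤ u ≤ 1 (since R + |∇f|² = 1)
    (hderiv : ∀ s, 0 ≤ s → HasDerivAt (fun s => f (Γ s)) (u s) s)
    (hu0 : ∀ s, 0 ≤ s → 0 ≤ u s) (hu1 : ∀ s, 0 ≤ s → u s ≤ 1)
    -- |∇f| → 1 along Γ (since R → 0 at infinity)
    (htend : Tendsto u atTop (𝓝 1))
    -- convexity of f along minimal geodesics (Ric ≥ 0, |∇f| ≤ 1):
    (hconv : ∀ x y : M, f y - f x ≤ dist x y) :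
    ∀ ε : ℝ, 0 < ε → ∃ C : ℝ, 0 < C ∧ ∀ s : ℝ, C < s →
      (1 - ε) * s ≤ dist (Γ s) p ∧ dist (Γ s) p ≤ s :=
  integral_curve_asymptotic_distance_general f Γ p hp u hLip hderiv htend hconv
end
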